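/- If a normalized block sequence (x_n) in (c₀₀, ‖·‖_{JT_{2,p}}) is equivalent to the unit vector basis of ℓ_p, then lim_n ‖x_n|_σ‖ = 0 for every branch σ of 𝒯. -/

import Mathlib

open Set Filter Topology

/-- `k` is an immediate successor of `n` in the order `le`. -/
def ImmSucc (le : ℕ → ℕ → Prop) (n k : ℕ) : Prop :=
  le n k ∧ n ≠ k ∧ ∀ m, le n m → le m k → m = n ∨ m = k

/-- The tree `𝒯`: a partial order on `ℕ` compatible with the usual order, in which the set of
strict predecessors of every element is finite and linearly ordered, and every element has
infinitely many immediate successors. -/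
structure IsJTTree (le : ℕ → ℕ → Prop) : Prop where
  refl : ∀ n, le n n
  antisymm : ∀ {m n}, le m n → le n m → m = n
  trans : ∀ {a b c}, le a b → le b c → le a c
  compat : ∀ {m n}, le m n → m ≤ n
  pred_finite : ∀ n, {m | le m n ∧ m ≠ n}.Finite
  pred_linear : ∀ n a b, le a n → le b n → le a b ∨ le b a
  succ_infinite : ∀ n, {k | ImmSucc le n k}.Infinite

/-- A segment of the tree: a nonempty set of the form `{k : m ⪯ k ∧ k ⪯ n}`. -/
def IsSegment (le : ℕ → ℕ → Prop) (s : Set ℕ) : Prop :=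
  ∃ m n, le m n ∧ s = {k | le m k ∧ le k n}

/-- A branch: a maximal linearly ordered subset of `ℕ`. -/
def IsBranch (le : ℕ → ℕ → Prop) (σ : Set ℕ) : Prop :=
  IsChain le σ ∧ ∀ τ, IsChain le τ → σ ⊆ τ → σ = τ

/-- `‖x‖_s = (∑_{i ∈ s} x(i)²)^(1/2)`. -/
noncomputable def segNorm (x : ℕ → ℝ) (s : Set ℕ) : ℝ :=
  Real.sqrt (∑' i, s.indicator (fun j => (x j) ^ 2) i)

/-- The `JT_{2,p}` norm on finitely supported sequences:
`‖x‖ = sup {(∑_k ‖x‖_{s_k}^p)^(1/p) : s₁,…,s_n pairwise disjoint segments}`. -/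
noncomputable def jtNorm (le : ℕ → ℕ → Prop) (p : ℝ) (x : ℕ → ℝ) : ℝ :=
  sSup { r : ℝ | ∃ (n : ℕ) (s : Fin n → Set ℕ),
    (∀ k, IsSegment le (s k)) ∧
    (∀ k l, k ≠ l → Disjoint (s k) (s l)) ∧
    r = (∑ k : Fin n, segNorm x (s k) ^ p) ^ (1 / p) }

/-- A block sequence of finitely supported vectors. -/
def IsBlockSeq (x : ℕ → ℕ → ℝ) : Prop :=
  (∀ n, (Function.support (x n)).Finite) ∧
  ∀ n i j, x n i ≠ 0 → x (n + 1) j ≠ 0 → i < j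

/-- The final segment `σ_{>l} = {k ∈ σ : k > l}`. -/
def finalSeg (σ : Set ℕ) (l : ℕ) : Set ℕ := {k ∈ σ | l < k}

/-- Two final segments are incomparable when their least elements are `le`-incomparable. -/
def IncompFinal (le : ℕ → ℕ → Prop) (A B : Set ℕ) : Prop :=
  A.Nonempty ∧ B.Nonempty ∧ ¬ le (sInf A) (sInf B) ∧ ¬ le (sInf B) (sInf A)

/-!
Suppose `‖x_n|_σ‖ ≥ ε` for infinitely many `n` and pick `N` of them. By `2 ≤ p` the JT norm is
dominated by the `ℓ₂` norm, so each chosen `x_n` has `ℓ₂` mass at least `ε` on `σ`. The `x_n`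
have disjoint supports, hence `y = ∑ x_n` has `ℓ₂` norm at least `ε √N` on `σ`; and the finitely
many points of `σ ∩ supp y` lie in one segment of the branch, so `‖y‖ ≥ ε √N`. The upper `ℓ_p`
estimate gives `‖y‖ ≤ C N^{1/p}`, impossible for large `N` because `p > 2`.
-/

section SegNorm

variable {x : ℕ → ℝ} {s t : Set ℕ}

lemma segNorm_nonneg (x : ℕ → ℝ) (s : Set ℕ) : 0 ≤ segNorm x s := Real.sqrt_nonneg _

lemma segNorm_sq (x : ℕ → ℝ) (s : Set ℕ) :
    segNorm x s ^ 2 = ∑' i, s.indicator (fun j => x j ^ 2) i :=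
  Real.sq_sqrt (tsum_nonneg fun i => indicator_nonneg (fun j _ => sq_nonneg (x j)) i)

lemma summable_indicator_sq (hx : (Function.support x).Finite) (s : Set ℕ) :
    Summable (s.indicator fun j => x j ^ 2) :=
  summable_of_hasFiniteSupport <| hx.subset fun i hi => by
    simp_all [Function.mem_support]

lemma segNorm_mono (hx : (Function.support x).Finite) (hst : s ⊆ t) :
    segNorm x s ≤ segNorm x t :=
  Real.sqrt_le_sqrt <| (summable_indicator_sq hx s).tsum_mono (summable_indicator_sq hx t)
    (indicator_le_indicator_of_subset hst fun j => sq_nonneg (x j))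

lemma segNorm_congr (h : ∀ i, x i ≠ 0 → (i ∈ s ↔ i ∈ t)) : segNorm x s = segNorm x t := by
  classical
  unfold segNorm
  congr 1
  refine tsum_congr fun i => ?_
  by_cases hi : x i = 0
  · simp [Set.indicator_apply, hi]
  · simp [Set.indicator_apply, h i hi]

lemma segNorm_empty (x : ℕ → ℝ) : segNorm x ∅ = 0 := by simp [segNorm]

lemma segNorm_indicator_univ (x : ℕ → ℝ) (σ : Set ℕ) :
    segNorm (σ.indicator x) univ = segNorm x σ := by
  unfold segNorm
  congr 2 with i
  by_cases hi : i ∈ σ <;> simp [hi]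

lemma sum_segNorm_sq {ι : Type*} (hx : (Function.support x).Finite) (u : Finset ι)
    (s : ι → Set ℕ) (hs : (u : Set ι).PairwiseDisjoint s) :
    ∑ k ∈ u, segNorm x (s k) ^ 2 = segNorm x (⋃ k ∈ u, s k) ^ 2 := by
  simp only [segNorm_sq, Finset.indicator_biUnion_apply u s hs]
  exact (Summable.tsum_finsetSum fun k _ => summable_indicator_sq hx (s k)).symm

lemma sq_sum_eq_sum_sq {ι R : Type*} [Semiring R] (u : Finset ι) (f : ι → R)
    (h : ∀ i ∈ u, ∀ j ∈ u, f i ≠ 0 → i ≠ j → f j = 0) :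
    (∑ i ∈ u, f i) ^ 2 = ∑ i ∈ u, f i ^ 2 := by
  by_cases hf : ∃ i ∈ u, f i ≠ 0
  · obtain ⟨i, hi, hfi⟩ := hf
    have hzero : ∀ j ∈ u, j ≠ i → f j = 0 := fun j hj hji => h i hi j hj hfi hji.symm
    rw [Finset.sum_eq_single_of_mem i hi hzero,
      Finset.sum_eq_single_of_mem i hi fun j hj hji => by simp [hzero j hj hji]]
  · push Not at hf
    rw [Finset.sum_eq_zero hf, Finset.sum_eq_zero fun i hi => by simp [hf i hi]]
    exact zero_pow two_ne_zero

lemma segNorm_sum_sq {ι : Type*} (u : Finset ι) (x : ι → ℕ → ℝ)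
    (hfin : ∀ n ∈ u, (Function.support (x n)).Finite)
    (hdisj : (u : Set ι).PairwiseDisjoint fun n => Function.support (x n)) (s : Set ℕ) :
    segNorm (fun j => ∑ n ∈ u, x n j) s ^ 2 = ∑ n ∈ u, segNorm (x n) s ^ 2 := by
  have hpt : (s.indicator fun j => (∑ n ∈ u, x n j) ^ 2) =
      ∑ n ∈ u, s.indicator fun j => x n j ^ 2 := by
    rw [← Finset.indicator_sum]
    congr 1 with j
    rw [Finset.sum_apply, sq_sum_eq_sum_sq]
    intro n hn m hm hxn hnm
    by_contra hxm
    exact Set.disjoint_left.mp (hdisj hn hm hnm) hxn hxm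
  rw [segNorm_sq, hpt]
  simp only [Finset.sum_apply, segNorm_sq]
  exact Summable.tsum_finsetSum fun n hn => summable_indicator_sq (hfin n hn) s

end SegNorm

section JTNorm

variable {le : ℕ → ℕ → Prop} {p : ℝ} {x : ℕ → ℝ}

-- `jtNorm le p x` is, by definition, `sSup (jtNormValues le p x)`.
def jtNormValues (le : ℕ → ℕ → Prop) (p : ℝ) (x : ℕ → ℝ) : Set ℝ :=
  { r : ℝ | ∃ (n : ℕ) (s : Fin n → Set ℕ),
    (∀ k, IsSegment le (s k)) ∧
    (∀ k l, k ≠ l → Disjoint (s k) (s l)) ∧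
    r = (∑ k : Fin n, segNorm x (s k) ^ p) ^ (1 / p) }

lemma rpow_sum_rpow_le_sqrt_sum_sq {ι : Type*} (u : Finset ι) {a : ι → ℝ}
    (ha : ∀ i ∈ u, 0 ≤ a i) (hp : 2 ≤ p) :
    (∑ i ∈ u, a i ^ p) ^ (1 / p) ≤ √(∑ i ∈ u, a i ^ 2) := by
  set S := ∑ i ∈ u, a i ^ 2
  have hS : 0 ≤ S := Finset.sum_nonneg fun i _ => sq_nonneg (a i)
  -- each `a i` is at most `√S`, so `a i ^ p ≤ √S ^ (p - 2) * a i ^ 2`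
  have hterm : ∀ i ∈ u, a i ^ p ≤ √S ^ (p - 2) * a i ^ 2 := by
    intro i hi
    have hai : a i ≤ √S :=
      Real.le_sqrt_of_sq_le (Finset.single_le_sum (fun j _ => sq_nonneg (a j)) hi)
    calc a i ^ p = a i ^ (p - 2) * a i ^ (2 : ℝ) := by
          rw [← Real.rpow_add' (ha i hi) (by linarith), sub_add_cancel]
      _ ≤ √S ^ (p - 2) * a i ^ 2 := by
          rw [Real.rpow_two]
          gcongr
          exact ha i hi
  have hsum : ∑ i ∈ u, a i ^ p ≤ √S ^ p :=
    calc ∑ i ∈ u, a i ^ p ≤ ∑ i ∈ u, √S ^ (p - 2) * a i ^ 2 := Finset.sum_le_sum hterm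
      _ = √S ^ (p - 2) * √S ^ (2 : ℝ) := by
          rw [← Finset.mul_sum, Real.rpow_two, Real.sq_sqrt hS]
      _ = √S ^ p := by
          rw [← Real.rpow_add' (Real.sqrt_nonneg S) (by linarith), sub_add_cancel]
  calc (∑ i ∈ u, a i ^ p) ^ (1 / p) ≤ (√S ^ p) ^ (1 / p) := by
        gcongr
        exact Finset.sum_nonneg fun i hi => Real.rpow_nonneg (ha i hi) p
    _ = √S := by
        rw [← Real.rpow_mul (Real.sqrt_nonneg S), mul_one_div_cancel (by linarith),
          Real.rpow_one]

lemma le_segNorm_univ_of_mem_jtNormValues (hp : 2 ≤ p) (hx : (Function.support x).Finite)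
    {r : ℝ} (hr : r ∈ jtNormValues le p x) : r ≤ segNorm x univ := by
  obtain ⟨n, s, -, hdisj, rfl⟩ := hr
  have hs : ((Finset.univ : Finset (Fin n)) : Set (Fin n)).PairwiseDisjoint s :=
    fun k _ l _ hkl => hdisj k l hkl
  calc (∑ k, segNorm x (s k) ^ p) ^ (1 / p)
      ≤ √(∑ k, segNorm x (s k) ^ 2) :=
        rpow_sum_rpow_le_sqrt_sum_sq _ (fun k _ => segNorm_nonneg x (s k)) hp
    _ = segNorm x (⋃ k ∈ Finset.univ, s k) := by
        rw [sum_segNorm_sq hx _ s hs, Real.sqrt_sq (segNorm_nonneg _ _)]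
    _ ≤ segNorm x univ := segNorm_mono hx (subset_univ _)

lemma zero_mem_jtNormValues (hp : p ≠ 0) : 0 ∈ jtNormValues le p x :=
  ⟨0, finZeroElim, finZeroElim, finZeroElim, by simp [hp]⟩

lemma segNorm_mem_jtNormValues (hp : p ≠ 0) {s : Set ℕ} (hs : IsSegment le s) :
    segNorm x s ∈ jtNormValues le p x := by
  refine ⟨1, fun _ => s, fun _ => hs, fun k l hkl => absurd (Subsingleton.elim k l) hkl, ?_⟩
  rw [Fin.sum_univ_one, ← Real.rpow_mul (segNorm_nonneg x s), mul_one_div_cancel hp,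
    Real.rpow_one]

lemma bddAbove_jtNormValues (hp : 2 ≤ p) (hx : (Function.support x).Finite) :
    BddAbove (jtNormValues le p x) :=
  ⟨segNorm x univ, fun _ => le_segNorm_univ_of_mem_jtNormValues hp hx⟩

lemma jtNorm_le_segNorm_univ (hp : 2 ≤ p) (hx : (Function.support x).Finite) :
    jtNorm le p x ≤ segNorm x univ :=
  csSup_le ⟨0, zero_mem_jtNormValues (by positivity)⟩ fun _ =>
    le_segNorm_univ_of_mem_jtNormValues hp hx

lemma jtNorm_nonneg (hp : 2 ≤ p) (hx : (Function.support x).Finite) : 0 ≤ jtNorm le p x :=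
  le_csSup (bddAbove_jtNormValues hp hx) (zero_mem_jtNormValues (by positivity))

lemma segNorm_le_jtNorm (hp : 2 ≤ p) (hx : (Function.support x).Finite) {s : Set ℕ}
    (hs : IsSegment le s) : segNorm x s ≤ jtNorm le p x :=
  le_csSup (bddAbove_jtNormValues hp hx) (segNorm_mem_jtNormValues (by positivity) hs)

lemma jtNorm_zero (hp : 2 ≤ p) : jtNorm le p 0 = 0 :=
  le_antisymm ((jtNorm_le_segNorm_univ hp (by simp)).trans_eq (by simp [segNorm]))
    (jtNorm_nonneg hp (by simp))

lemma jtNorm_indicator_le_segNorm (hp : 2 ≤ p) (hx : (Function.support x).Finite)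
    (σ : Set ℕ) : jtNorm le p (σ.indicator x) ≤ segNorm x σ :=
  segNorm_indicator_univ x σ ▸
    jtNorm_le_segNorm_univ hp (by simpa using hx.inter_of_right σ)

end JTNorm

section Branch

variable {le : ℕ → ℕ → Prop} {σ : Set ℕ}

lemma IsBranch.le_of_le (hT : IsJTTree le) (hσ : IsBranch le σ) {a b : ℕ} (ha : a ∈ σ)
    (hb : b ∈ σ) (hab : a ≤ b) : le a b := by
  rcases eq_or_ne a b with rfl | hne
  · exact hT.refl a
  · exact (hσ.1 ha hb hne).resolve_right fun hba => hne (le_antisymm hab (hT.compat hba))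

lemma IsBranch.mem_of_le (hT : IsJTTree le) (hσ : IsBranch le σ) {b k : ℕ} (hb : b ∈ σ)
    (hkb : le k b) : k ∈ σ := by
  have hcomp : ∀ c ∈ σ, le c k ∨ le k c := by
    intro c hc
    rcases le_total c b with hcb | hbc
    · exact hT.pred_linear b c k (hσ.le_of_le hT hc hb hcb) hkb
    · exact Or.inr (hT.trans hkb (hσ.le_of_le hT hb hc hbc))
  have hchain : IsChain le (insert k σ) :=
    hσ.1.insert fun c hc _ => (hcomp c hc).symm
  exact hσ.2 _ hchain (subset_insert k σ) ▸ mem_insert k σ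

lemma IsBranch.exists_isSegment (hT : IsJTTree le) (hσ : IsBranch le σ) {A : Set ℕ}
    (hA : A.Finite) (hne : A.Nonempty) (hAσ : A ⊆ σ) :
    ∃ s, IsSegment le s ∧ A ⊆ s ∧ s ⊆ σ := by
  have ha : sInf A ∈ A := Nat.sInf_mem hne
  have hb : sSup A ∈ A := Nat.sSup_mem hne hA.bddAbove
  refine ⟨{k | le (sInf A) k ∧ le k (sSup A)},
    ⟨_, _, hσ.le_of_le hT (hAσ ha) (hAσ hb) (Nat.sInf_le hb), rfl⟩,
    fun k hk => ⟨hσ.le_of_le hT (hAσ ha) (hAσ hk) (Nat.sInf_le hk),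
      hσ.le_of_le hT (hAσ hk) (hAσ hb) (le_csSup hA.bddAbove hk)⟩,
    fun k hk => hσ.mem_of_le hT (hAσ hb) hk.2⟩

lemma segNorm_le_jtNorm_of_isBranch (hT : IsJTTree le) (hσ : IsBranch le σ) {p : ℝ}
    (hp : 2 ≤ p) {x : ℕ → ℝ} (hx : (Function.support x).Finite) :
    segNorm x σ ≤ jtNorm le p x := by
  rcases (σ ∩ Function.support x).eq_empty_or_nonempty with hempty | hne
  · have hzero : segNorm x σ = segNorm x ∅ := segNorm_congr fun i hi =>
      iff_of_false (fun hiσ => hempty.subset ⟨hiσ, hi⟩) (notMem_empty i)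
    rw [hzero, segNorm_empty]
    exact jtNorm_nonneg hp hx
  · obtain ⟨s, hs, hAs, hsσ⟩ :=
      hσ.exists_isSegment hT (hx.inter_of_right σ) hne inter_subset_left
    have hσs : segNorm x σ = segNorm x s :=
      segNorm_congr fun i hi => ⟨fun hiσ => hAs ⟨hiσ, hi⟩, fun his => hsσ his⟩
    exact hσs ▸ segNorm_le_jtNorm hp hx hs

end Branch

lemma IsBlockSeq.lt_of_lt {x : ℕ → ℕ → ℝ} (hx : IsBlockSeq x) (hne : ∀ n, x n ≠ 0) {n m : ℕ}
    (hnm : n < m) {i j : ℕ} (hi : x n i ≠ 0) (hj : x m j ≠ 0) : i < j := by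
  induction m, hnm using Nat.le_induction generalizing j with
  | base => exact hx.2 n i j hi hj
  | succ m hnm ih =>
    obtain ⟨k, hk⟩ := Function.ne_iff.mp (hne m)
    exact (ih hk).trans (hx.2 m k j hk hj)

lemma IsBlockSeq.pairwise_disjoint_support {x : ℕ → ℕ → ℝ} (hx : IsBlockSeq x)
    (hne : ∀ n, x n ≠ 0) :
    Pairwise fun n m => Disjoint (Function.support (x n)) (Function.support (x m)) := by
  intro n m hnm
  refine Set.disjoint_left.mpr fun i hin him => ?_
  rcases hnm.lt_or_gt with h | h
  · exact (hx.lt_of_lt hne h hin him).false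
  · exact (hx.lt_of_lt hne h him hin).false

lemma mul_sqrt_card_le_jtNorm_sum {le : ℕ → ℕ → Prop} (hT : IsJTTree le) {σ : Set ℕ}
    (hσ : IsBranch le σ) {p : ℝ} (hp : 2 ≤ p) {x : ℕ → ℕ → ℝ} (hx : IsBlockSeq x)
    (hne : ∀ n, x n ≠ 0) {F : Finset ℕ} {ε : ℝ} (hε : 0 ≤ ε)
    (hF : ∀ n ∈ F, ε ≤ jtNorm le p (σ.indicator (x n))) :
    ε * √F.card ≤ jtNorm le p (fun j => ∑ n ∈ F, x n j) := by
  have hfin : (Function.support fun j => ∑ n ∈ F, x n j).Finite :=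
    (F.finite_toSet.biUnion fun n _ => hx.1 n).subset (Finset.support_sum F x)
  have hsq : (ε * √F.card) ^ 2 ≤ segNorm (fun j => ∑ n ∈ F, x n j) σ ^ 2 :=
    calc (ε * √F.card) ^ 2 = ∑ _n ∈ F, ε ^ 2 := by
          rw [mul_pow, Real.sq_sqrt (Nat.cast_nonneg _), Finset.sum_const, nsmul_eq_mul, mul_comm]
      _ ≤ ∑ n ∈ F, segNorm (x n) σ ^ 2 := Finset.sum_le_sum fun n hn =>
          pow_le_pow_left₀ hε ((hF n hn).trans (jtNorm_indicator_le_segNorm hp (hx.1 n) σ)) 2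
      _ = segNorm (fun j => ∑ n ∈ F, x n j) σ ^ 2 :=
          (segNorm_sum_sq F x (fun n _ => hx.1 n)
            ((hx.pairwise_disjoint_support hne).set_pairwise _) σ).symm
  calc ε * √F.card ≤ segNorm (fun j => ∑ n ∈ F, x n j) σ :=
        (pow_le_pow_iff_left₀ (by positivity) (segNorm_nonneg _ _) two_ne_zero).mp hsq
    _ ≤ jtNorm le p (fun j => ∑ n ∈ F, x n j) := segNorm_le_jtNorm_of_isBranch hT hσ hp hfin

lemma sum_fin_indicator_one_mul {M : Type*} [NonAssocSemiring M]
    {F : Finset ℕ} {m : ℕ} (hF : F ⊆ Finset.range m) (g : ℕ → M) :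
    ∑ i : Fin m, (F : Set ℕ).indicator 1 i * g i = ∑ n ∈ F, g n := by
  classical
  rw [Fin.sum_univ_eq_sum_range (fun i => (F : Set ℕ).indicator 1 i * g i)]
  simp only [Set.indicator_apply, Finset.mem_coe, Pi.one_apply, ite_mul, one_mul, zero_mul]
  rw [Finset.sum_ite_mem, Finset.inter_eq_right.mpr hF]

lemma jtNorm_sum_le_of_upper_estimate {le : ℕ → ℕ → Prop} {p C : ℝ} (hp : p ≠ 0)
    {x : ℕ → ℕ → ℝ} (hC : ∀ (m : ℕ) (a : Fin m → ℝ),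
      jtNorm le p (fun j => ∑ i : Fin m, a i * x i j) ≤ C * (∑ i : Fin m, |a i| ^ p) ^ (1 / p))
    (F : Finset ℕ) : jtNorm le p (fun j => ∑ n ∈ F, x n j) ≤ C * (F.card : ℝ) ^ (1 / p) := by
  obtain ⟨m, hm⟩ := F.exists_nat_subset_range
  have hvec : (fun j => ∑ i : Fin m, (F : Set ℕ).indicator 1 i * x i j) =
      fun j => ∑ n ∈ F, x n j := funext fun j => sum_fin_indicator_one_mul hm (x · j)
  have hcoeff : ∑ i : Fin m, |(F : Set ℕ).indicator (1 : ℕ → ℝ) i| ^ p = F.card := by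
    have habs : ∀ i : ℕ, |(F : Set ℕ).indicator (1 : ℕ → ℝ) i| ^ p =
        (F : Set ℕ).indicator 1 i * 1 := by
      intro i
      by_cases hi : i ∈ (F : Set ℕ) <;> simp [hi, hp]
    simp only [habs]
    exact (sum_fin_indicator_one_mul hm fun _ => (1 : ℝ)).trans (by simp)
  simpa only [hvec, hcoeff] using hC m fun i => (F : Set ℕ).indicator 1 i

lemma exists_nat_mul_rpow_lt_mul_sqrt {p : ℝ} (hp : 2 < p) (C : ℝ) {ε : ℝ} (hε : 0 < ε) :
    ∃ N : ℕ, C * (N : ℝ) ^ (1 / p) < ε * √N := by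
  have hexp : 0 < 1 / 2 - 1 / p := by
    rw [sub_pos, one_div_lt_one_div (by linarith) two_pos]
    exact hp
  obtain ⟨N, hN1, hNC⟩ := ((eventually_ge_atTop 1).and
    (((tendsto_rpow_atTop hexp).comp tendsto_natCast_atTop_atTop).eventually_gt_atTop
      (C / ε))).exists
  have hNpos : (0 : ℝ) < N := by exact_mod_cast hN1
  refine ⟨N, ?_⟩
  have hsqrt : √(N : ℝ) = (N : ℝ) ^ (1 / 2 - 1 / p) * (N : ℝ) ^ (1 / p) := by
    rw [← Real.rpow_add hNpos, sub_add_cancel, Real.sqrt_eq_rpow, one_div]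
  rw [hsqrt, ← mul_assoc]
  exact mul_lt_mul_of_pos_right ((div_lt_iff₀' hε).mp hNC) (Real.rpow_pos_of_pos hNpos _)

lemma exists_pos_infinite_setOf_le_of_not_tendsto {f : ℕ → ℝ} (hf : ∀ n, 0 ≤ f n)
    (h : ¬ Tendsto f atTop (𝓝 0)) : ∃ ε > 0, {n | ε ≤ f n}.Infinite := by
  by_contra! hfin
  refine h (tendsto_order.2 ⟨fun a ha => Eventually.of_forall fun n => ha.trans_le (hf n),
    fun a ha => ?_⟩)
  have hcof := (hfin a ha).eventually_cofinite_notMem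
  rw [Nat.cofinite_eq_atTop] at hcof
  exact hcof.mono fun n hn => not_le.mp hn

theorem stmt4 (le : ℕ → ℕ → Prop) (hT : IsJTTree le) (p : ℝ) (hp : 2 < p)
    (x : ℕ → ℕ → ℝ) (hblock : IsBlockSeq x)
    (hnorm : ∀ n, jtNorm le p (x n) = 1)
    (hequiv : ∃ c C : ℝ, 0 < c ∧ c ≤ C ∧ ∀ (m : ℕ) (a : Fin m → ℝ),
      c * (∑ i : Fin m, |a i| ^ p) ^ (1 / p) ≤
        jtNorm le p (fun j => ∑ i : Fin m, a i * x i j) ∧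
      jtNorm le p (fun j => ∑ i : Fin m, a i * x i j) ≤
        C * (∑ i : Fin m, |a i| ^ p) ^ (1 / p)) :
    ∀ σ, IsBranch le σ →
      Tendsto (fun n => jtNorm le p (σ.indicator (x n))) atTop (nhds 0) := by
  obtain ⟨_, C, -, -, hbounds⟩ := hequiv
  intro σ hσ
  have hne : ∀ n, x n ≠ 0 := fun n hzero => by
    simpa [hzero, jtNorm_zero hp.le] using hnorm n
  by_contra hlim
  obtain ⟨ε, hε, hinf⟩ := exists_pos_infinite_setOf_le_of_not_tendsto
    (fun n => jtNorm_nonneg hp.le (by simpa using (hblock.1 n).inter_of_right σ)) hlim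
  obtain ⟨N, hN⟩ := exists_nat_mul_rpow_lt_mul_sqrt hp C hε
  obtain ⟨F, hFε, rfl⟩ := hinf.exists_subset_card_eq N
  refine hN.not_ge ?_
  calc ε * √F.card ≤ jtNorm le p (fun j => ∑ n ∈ F, x n j) :=
        mul_sqrt_card_le_jtNorm_sum hT hσ hp.le hblock hne hε.le hFε
    _ ≤ C * (F.card : ℝ) ^ (1 / p) :=
        jtNorm_sum_le_of_upper_estimate (by positivity) (fun m a => (hbounds m a).2) F
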